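/- arXiv:1406.0641 — 8 statements merged into one kernel-verified Lean document; each statement's English description precedes it below -/
import Mathlib

section
/- For a rooted ST-structure that is closed under bounded unions, the structure is connected if and only if for any two ST-configurations (S,T) ⊆ (S',T') (componentwise inclusion) in the structure, there exists a path of single steps starting in (S,T) and ending in (S',T'). -/
/-!
Configurations are ordered componentwise, with `⊥ = (∅, ∅)` and `⊔` the componentwise union.
Connectedness says that every configuration other than `⊥` is the target of a step, and steps
go strictly up, so by well-founded induction every `c'` is reached from `⊥` along a path that
stays below `c'`. For `c ≤ c'`, join every configuration of such a path with `c`: the joins lie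
below `c'`, hence in the structure by closure under bounded unions, and each step becomes either
a step or no move, giving a path from `c ⊔ ⊥ = c` to `c ⊔ c' = c'`. Conversely, the last step
of a path from `⊥` to `c` exhibits the event that connectedness asks to remove from `c`.
-/

/-- An ST-configuration over `E` is a pair of finite sets of events. -/
abbrev STConfig (E : Type*) := Finset E × Finset E

variable {E : Type*} [DecidableEq E]

/-- An ST-structure: every member `(S,T)` has `T ⊆ S`, and `(S,T) ∈ ST` implies `(S,S) ∈ ST`. -/
def IsSTStruct (ST : Set (STConfig E)) : Prop :=
  (∀ c ∈ ST, c.2 ⊆ c.1) ∧ (∀ c ∈ ST, ((c.1, c.1) : STConfig E) ∈ ST)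

/-- Rooted: contains `(∅,∅)`. -/
def STRooted (ST : Set (STConfig E)) : Prop := ((∅, ∅) : STConfig E) ∈ ST

/-- Connected. -/
def STConnected (ST : Set (STConfig E)) : Prop :=
  ∀ c ∈ ST, c ≠ ((∅, ∅) : STConfig E) →
    (∃ e ∈ c.1, ((c.1.erase e, c.2) : STConfig E) ∈ ST) ∨
    (∃ e ∈ c.2, ((c.1, c.2.erase e) : STConfig E) ∈ ST)

/-- Closed under bounded unions. -/
def STClosedBUnion (ST : Set (STConfig E)) : Prop :=
  ∀ c ∈ ST, ∀ c' ∈ ST, ∀ c'' ∈ ST,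
    c.1 ∪ c'.1 ⊆ c''.1 → c.2 ∪ c'.2 ⊆ c''.2 →
      ((c.1 ∪ c'.1, c.2 ∪ c'.2) : STConfig E) ∈ ST

/-- A single step: an s-step or a t-step. -/
def STStep (ST : Set (STConfig E)) (c c' : STConfig E) : Prop :=
  c ∈ ST ∧ c' ∈ ST ∧
  ((c'.2 = c.2 ∧ ∃ e, e ∉ c.1 ∧ c'.1 = insert e c.1) ∨
   (c'.1 = c.1 ∧ ∃ e, e ∈ c.1 ∧ e ∉ c.2 ∧ c'.2 = insert e c.2))

open Relation Set

namespace STStep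

variable {ST ST' : Set (STConfig E)} {a b c : STConfig E}

theorem mono (h : ST ⊆ ST') (hab : STStep ST a b) : STStep ST' a b :=
  ⟨h hab.1, h hab.2.1, hab.2.2⟩

theorem lt (hab : STStep ST a b) : a < b := by
  obtain ⟨-, -, ⟨h2, e, he, h1⟩ | ⟨h1, e, -, he, h2⟩⟩ := hab
  · exact Prod.lt_iff.2 <| .inl ⟨h1 ▸ Finset.ssubset_insert he, h2.ge⟩
  · exact Prod.lt_iff.2 <| .inr ⟨h1.ge, h2 ▸ Finset.ssubset_insert he⟩

theorem exists_erase_mem (hab : STStep ST a b) :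
    (∃ e ∈ b.1, ((b.1.erase e, b.2) : STConfig E) ∈ ST) ∨
      (∃ e ∈ b.2, ((b.1, b.2.erase e) : STConfig E) ∈ ST) := by
  obtain ⟨a1, a2⟩ := a
  obtain ⟨b1, b2⟩ := b
  simp only [STStep] at hab
  obtain ⟨ha, -, ⟨rfl, e, he, rfl⟩ | ⟨rfl, e, -, he, rfl⟩⟩ := hab
  · exact .inl ⟨e, Finset.mem_insert_self e a1, by rwa [Finset.erase_insert he]⟩
  · exact .inr ⟨e, Finset.mem_insert_self e a2, by rwa [Finset.erase_insert he]⟩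

theorem sup_left (hab : STStep ST a b) (ha : c ⊔ a ∈ ST) (hb : c ⊔ b ∈ ST) :
    ReflGen (STStep ST) (c ⊔ a) (c ⊔ b) := by
  obtain ⟨a1, a2⟩ := a
  obtain ⟨b1, b2⟩ := b
  simp only [STStep] at hab
  obtain ⟨-, -, ⟨rfl, e, he, rfl⟩ | ⟨rfl, e, hea, he, rfl⟩⟩ := hab
  · by_cases hc : e ∈ c.1
    · rw [show c ⊔ (insert e a1, b2) = c ⊔ (a1, b2) from Prod.ext (by simp [hc]) rfl]
    · refine .single ⟨ha, hb, .inl ⟨rfl, e, ?_, Finset.union_insert e c.1 a1⟩⟩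
      simp [hc, he]
  · by_cases hc : e ∈ c.2
    · rw [show c ⊔ (b1, insert e a2) = c ⊔ (b1, a2) from Prod.ext rfl (by simp [hc])]
    · refine .single ⟨ha, hb, .inr ⟨rfl, e, Finset.mem_union_right _ hea, ?_,
        Finset.union_insert e c.2 a2⟩⟩
      simp [hc, he]

end STStep

theorem exists_stStep_iff {ST : Set (STConfig E)} {c : STConfig E} (hc : c ∈ ST)
    (hTS : c.2 ⊆ c.1) :
    (∃ b, STStep ST b c) ↔
      (∃ e ∈ c.1, ((c.1.erase e, c.2) : STConfig E) ∈ ST) ∨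
        (∃ e ∈ c.2, ((c.1, c.2.erase e) : STConfig E) ∈ ST) := by
  refine ⟨fun ⟨b, hb⟩ => hb.exists_erase_mem, ?_⟩
  rintro (⟨e, he, hmem⟩ | ⟨e, he, hmem⟩)
  · exact ⟨_, hmem, hc, .inl ⟨rfl, e, Finset.notMem_erase e c.1, (Finset.insert_erase he).symm⟩⟩
  · exact ⟨_, hmem, hc,
      .inr ⟨rfl, e, hTS he, Finset.notMem_erase e c.2, (Finset.insert_erase he).symm⟩⟩

theorem IsSTStruct.stConnected_iff {ST : Set (STConfig E)} (hST : IsSTStruct ST) :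
    STConnected ST ↔ ∀ c ∈ ST, c ≠ ⊥ → ∃ b, STStep ST b c :=
  forall₂_congr fun c hc => imp_congr_right fun _ => (exists_stStep_iff hc (hST.1 c hc)).symm

theorem reflTransGen_bot_of_forall_exists_stStep {ST : Set (STConfig E)}
    (hconn : ∀ c ∈ ST, c ≠ ⊥ → ∃ b, STStep ST b c) (c : STConfig E) (hc : c ∈ ST) :
    ReflTransGen (STStep (ST ∩ Iic c)) ⊥ c := by
  induction c using WellFoundedLT.induction with
  | _ c ih =>
  by_cases hbot : c = ⊥
  · exact hbot ▸ .refl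
  obtain ⟨b, hbc⟩ := hconn c hc hbot
  have hlt := hbc.lt
  have hsub : ST ∩ Iic b ⊆ ST ∩ Iic c := inter_subset_inter_right _ (Iic_subset_Iic.2 hlt.le)
  exact .tail (ReflTransGen.mono (fun _ _ => STStep.mono hsub) _ _ (ih b hlt hbc.1))
    ⟨⟨hbc.1, hlt.le⟩, ⟨hc, mem_Iic.2 le_rfl⟩, hbc.2.2⟩

theorem STClosedBUnion.sup_mem {ST : Set (STConfig E)} (hbu : STClosedBUnion ST)
    {a b d : STConfig E} (ha : a ∈ ST) (hb : b ∈ ST) (hd : d ∈ ST) (h : a ⊔ b ≤ d) :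
    a ⊔ b ∈ ST :=
  hbu a ha b hb d hd h.1 h.2

theorem STClosedBUnion.reflTransGen_sup_left {ST : Set (STConfig E)} (hbu : STClosedBUnion ST)
    {a b c d : STConfig E} (hc : c ∈ ST) (hd : d ∈ ST) (hcd : c ≤ d)
    (hab : ReflTransGen (STStep (ST ∩ Iic d)) a b) :
    ReflTransGen (STStep ST) (c ⊔ a) (c ⊔ b) := by
  induction hab with
  | refl => exact .refl
  | tail _ hstep ih =>
    obtain ⟨⟨hx, hxd⟩, ⟨hy, hyd⟩, -⟩ := id hstep
    refine ih.trans (STStep.sup_left (hstep.mono inter_subset_left) ?_ ?_).to_reflTransGen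
    · exact hbu.sup_mem hc hx hd (sup_le hcd hxd)
    · exact hbu.sup_mem hc hy hd (sup_le hcd hyd)

/-- a rooted ST-structure closed under bounded unions is connected
iff for any two configurations included componentwise in one another there is a
path of single steps from the smaller to the larger. -/
theorem connected_iff_paths_between (ST : Set (STConfig E))
    (hST : IsSTStruct ST) (hroot : STRooted ST) (hbu : STClosedBUnion ST) :
    STConnected ST ↔
      ∀ c ∈ ST, ∀ c' ∈ ST, c.1 ⊆ c'.1 → c.2 ⊆ c'.2 →
        Relation.ReflTransGen (STStep ST) c c' := by
  rw [hST.stConnected_iff]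
  constructor
  · intro hconn c hc c' hc' h1 h2
    have hcc' : c ≤ c' := ⟨h1, h2⟩
    simpa [sup_eq_right.2 hcc'] using
      hbu.reflTransGen_sup_left hc hc' hcc' (reflTransGen_bot_of_forall_exists_stStep hconn c' hc')
  · intro hpath c hc hbot
    exact ((hpath ⊥ hroot c hc bot_le bot_le).cases_tail.resolve_left hbot).imp fun _ h => h.2
end

section
/- Let ST be a stable ST-structure (rooted, connected, closed under bounded unions and bounded intersections). For any (S,T) ∈ ST and events e, e' ∈ S: if neither e ≺ e' nor e' ≺ e (causality in (S,T)), then e ∥ e' (concurrency in (S,T)). -/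
variable {E : Type*} [DecidableEq E]

/-- Closed under bounded intersections. -/
def STClosedBInter (ST : Set (STConfig E)) : Prop :=
  ∀ c ∈ ST, ∀ c' ∈ ST, ∀ c'' ∈ ST,
    c.1 ∪ c'.1 ⊆ c''.1 → c.2 ∪ c'.2 ⊆ c''.2 →
      ((c.1 ∩ c'.1, c.2 ∩ c'.2) : STConfig E) ∈ ST

/-- Concurrency in a configuration `c`. -/
def STConcur (ST : Set (STConfig E)) (c : STConfig E) (e e' : E) : Prop :=
  ∃ d ∈ ST, d.1 ⊆ c.1 ∧ d.2 ⊆ c.2 ∧ e ∈ d.1 ∧ e ∉ d.2 ∧ e' ∈ d.1 ∧ e' ∉ d.2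

/-- Causality in a configuration `c`. -/
def STCauses (ST : Set (STConfig E)) (c : STConfig E) (e e' : E) : Prop :=
  e ≠ e' ∧ ∀ d ∈ ST, d.1 ⊆ c.1 → d.2 ⊆ c.2 → e' ∈ d.1 → e ∈ d.2

section

variable {ST : Set (STConfig E)}

/-- Descend from `u` by connectedness steps: removing an event from `S` keeps `f` started
because `T ⊆ S`, so the descent can only stop by removing `f` from `T`. -/
theorem exists_sub_mem_notMem_of_mem (hST : IsSTStruct ST) (hconn : STConnected ST)
    {u : STConfig E} (hu : u ∈ ST) {f : E} (hf : f ∈ u.1) :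
    ∃ v ∈ ST, v.1 ⊆ u.1 ∧ v.2 ⊆ u.2 ∧ f ∈ v.1 ∧ f ∉ v.2 := by
  by_cases hft : f ∉ u.2
  · exact ⟨u, hu, subset_rfl, subset_rfl, hf, hft⟩
  rw [not_not] at hft
  have hne : u ≠ ((∅, ∅) : STConfig E) := by
    rintro rfl
    simp at hf
  rcases hconn u hu hne with ⟨x, hx, hx'⟩ | ⟨x, hx, hx'⟩
  · have := Finset.card_erase_lt_of_mem hx
    obtain ⟨v, hv, h1, h2, hfv⟩ := exists_sub_mem_notMem_of_mem hST hconn hx' (hST.1 _ hx' hft)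
    exact ⟨v, hv, h1.trans (Finset.erase_subset _ _), h2, hfv⟩
  · have := Finset.card_erase_lt_of_mem hx
    obtain ⟨v, hv, h1, h2, hfv⟩ := exists_sub_mem_notMem_of_mem hST hconn hx' hf
    exact ⟨v, hv, h1, h2.trans (Finset.erase_subset _ _), hfv⟩
termination_by u.1.card + u.2.card

theorem exists_sub_of_not_causes (hST : IsSTStruct ST) (hconn : STConnected ST)
    (hbu : STClosedBUnion ST) {c : STConfig E} (hc : c ∈ ST) {e e' : E} (he : e ∈ c.1)
    (h : ¬ STCauses ST c e e') :
    ∃ d ∈ ST, d.1 ⊆ c.1 ∧ d.2 ⊆ c.2 ∧ e ∈ d.1 ∧ e' ∈ d.1 ∧ e ∉ d.2 := by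
  obtain ⟨w, hw, hw1, hw2, hew, hew'⟩ := exists_sub_mem_notMem_of_mem hST hconn hc he
  by_cases hee' : e = e'
  · subst hee'
    exact ⟨w, hw, hw1, hw2, hew, hew, hew'⟩
  simp only [STCauses, not_and, not_forall, exists_prop] at h
  obtain ⟨A, hA, hA1, hA2, he'A, heA⟩ := h hee'
  refine ⟨(A.1 ∪ w.1, A.2 ∪ w.2),
    hbu A hA w hw c hc (Finset.union_subset hA1 hw1) (Finset.union_subset hA2 hw2),
    Finset.union_subset hA1 hw1, Finset.union_subset hA2 hw2,
    Finset.mem_union_right _ hew, Finset.mem_union_left _ he'A, ?_⟩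
  simp only [Finset.mem_union, not_or]
  exact ⟨heA, hew'⟩

end

theorem stable_not_causes_imp_concur_general (ST : Set (STConfig E)) (hST : IsSTStruct ST)
    (hconn : STConnected ST)
    (hbu : STClosedBUnion ST) (hbi : STClosedBInter ST)
    (c : STConfig E) (hc : c ∈ ST) (e e' : E) (he : e ∈ c.1) (he' : e' ∈ c.1)
    (h1 : ¬ STCauses ST c e e') (h2 : ¬ STCauses ST c e' e) :
    STConcur ST c e e' := by
  obtain ⟨A, hA, hA1, hA2, heA, he'A, heA'⟩ := exists_sub_of_not_causes hST hconn hbu hc he h1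
  obtain ⟨B, hB, hB1, hB2, he'B, heB, he'B'⟩ :=
    exists_sub_of_not_causes hST hconn hbu hc he' h2
  refine ⟨(A.1 ∩ B.1, A.2 ∩ B.2),
    hbi A hA B hB c hc (Finset.union_subset hA1 hB1) (Finset.union_subset hA2 hB2),
    Finset.inter_subset_left.trans hA1, Finset.inter_subset_left.trans hA2,
    Finset.mem_inter.2 ⟨heA, heB⟩, fun h => heA' (Finset.mem_inter.1 h).1,
    Finset.mem_inter.2 ⟨he'A, he'B⟩, fun h => he'B' (Finset.mem_inter.1 h).2⟩

/-- in a stable ST-structure (rooted, connected, closed under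
bounded unions and intersections), if neither `e ≺ e'` nor `e' ≺ e` then `e ∥ e'`. -/
theorem stable_not_causes_imp_concur (ST : Set (STConfig E)) (hST : IsSTStruct ST)
    (hroot : STRooted ST) (hconn : STConnected ST)
    (hbu : STClosedBUnion ST) (hbi : STClosedBInter ST)
    (c : STConfig E) (hc : c ∈ ST) (e e' : E) (he : e ∈ c.1) (he' : e' ∈ c.1)
    (h1 : ¬ STCauses ST c e e') (h2 : ¬ STCauses ST c e' e) :
    STConcur ST c e e' :=
  stable_not_causes_imp_concur_general ST hST hconn hbu hbi c hc e e' he he' h1 h2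
end

section
/- For an ST-configuration (S,T) of an ST-structure ST that is rooted and connected, the causality relation ≺ on S extended with equality (e ⪯ e' iff e ≺ e' or e = e') is a partial order (reflexive, transitive, and antisymmetric). -/
variable {E : Type*} [DecidableEq E]

/-- Causality extended with equality: `e ⪯ e'`. -/
def STCausesEq (ST : Set (STConfig E)) (c : STConfig E) (e e' : E) : Prop :=
  STCauses ST c e e' ∨ e = e'

/-!
Transitivity of `≺` is immediate from `T ⊆ S`. For antisymmetry, suppose `e₁ ≺ e₂ ≺ e₁` and let
`(S', T') ∈ ST` lie below `(S, T)` with `e₁ ∈ S'`. Then `e₂ ∈ T'` and hence `e₁ ∈ T'`. Connectedness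
gives a smaller configuration one step below `(S', T')`, and it still contains `e₁`: an event removed
from `S'` cannot lie in `T'`, so it is not `e₁`. By descent no such configuration exists, contradicting
`e₁ ∈ S` for `(S, T)` itself.
-/

theorem STConnected.induction {ST : Set (STConfig E)} (hconn : STConnected ST)
    {P : STConfig E → Prop} (root : P (∅, ∅))
    (erase_fst : ∀ d ∈ ST, ∀ e ∈ d.1, ((d.1.erase e, d.2) : STConfig E) ∈ ST →
      P (d.1.erase e, d.2) → P d)
    (erase_snd : ∀ d ∈ ST, ∀ e ∈ d.2, ((d.1, d.2.erase e) : STConfig E) ∈ ST →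
      P (d.1, d.2.erase e) → P d) :
    ∀ d ∈ ST, P d := by
  intro d
  induction hn : d.1.card + d.2.card using Nat.strong_induction_on generalizing d with
  | _ n ih =>
    intro hd
    by_cases hd₀ : d = ((∅, ∅) : STConfig E)
    · exact hd₀ ▸ root
    rcases hconn d hd hd₀ with ⟨e, he, hd'⟩ | ⟨e, he, hd'⟩
    · refine erase_fst d hd e he hd' (ih _ ?_ _ rfl hd')
      have := Finset.card_erase_lt_of_mem he
      show (d.1.erase e).card + d.2.card < n
      omega
    · refine erase_snd d hd e he hd' (ih _ ?_ _ rfl hd')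
      have := Finset.card_erase_lt_of_mem he
      show d.1.card + (d.2.erase e).card < n
      omega

section Causality

variable {ST : Set (STConfig E)} {c : STConfig E} {e₁ e₂ e₃ : E}

theorem STCauses.notMem_of_symm (hST : IsSTStruct ST) (hconn : STConnected ST)
    (h₁₂ : STCauses ST c e₁ e₂) (h₂₁ : STCauses ST c e₂ e₁) :
    ∀ d ∈ ST, d.1 ⊆ c.1 → d.2 ⊆ c.2 → e₁ ∉ d.1 := by
  refine hconn.induction (fun _ _ h => by simp at h) ?_ ?_
  · intro d hd e he hd' ih hd₁ hd₂ he₁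
    have he₁T : e₁ ∈ d.2 := h₁₂.2 d hd hd₁ hd₂ (hST.1 d hd (h₂₁.2 d hd hd₁ hd₂ he₁))
    have heT : e ∉ d.2 := fun heT => by simpa using hST.1 _ hd' heT
    have hne : e₁ ≠ e := fun h => heT (h ▸ he₁T)
    exact ih ((Finset.erase_subset _ _).trans hd₁) hd₂ (Finset.mem_erase.2 ⟨hne, he₁⟩)
  · intro d _ e _ _ ih hd₁ hd₂ he₁
    exact ih hd₁ ((Finset.erase_subset _ _).trans hd₂) he₁

theorem STCauses.asymm (hST : IsSTStruct ST) (hconn : STConnected ST) (hc : c ∈ ST)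
    (he₁ : e₁ ∈ c.1) (h₁₂ : STCauses ST c e₁ e₂) : ¬STCauses ST c e₂ e₁ := fun h₂₁ =>
  h₁₂.notMem_of_symm hST hconn h₂₁ c hc subset_rfl subset_rfl he₁

theorem STCausesEq.trans (hST : IsSTStruct ST) (hconn : STConnected ST) (hc : c ∈ ST)
    (he₁ : e₁ ∈ c.1) : STCausesEq ST c e₁ e₂ → STCausesEq ST c e₂ e₃ → STCausesEq ST c e₁ e₃
  | .inr rfl, h₂₃ => h₂₃
  | .inl h₁₂, .inr rfl => .inl h₁₂
  | .inl h₁₂, .inl h₂₃ => by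
    by_cases h₁₃ : e₁ = e₃
    · subst h₁₃
      exact absurd h₂₃ (h₁₂.asymm hST hconn hc he₁)
    · exact .inl ⟨h₁₃, fun d hd hd₁ hd₂ he₃ =>
        h₁₂.2 d hd hd₁ hd₂ (hST.1 d hd (h₂₃.2 d hd hd₁ hd₂ he₃))⟩

theorem STCausesEq.antisymm (hST : IsSTStruct ST) (hconn : STConnected ST) (hc : c ∈ ST)
    (he₁ : e₁ ∈ c.1) : STCausesEq ST c e₁ e₂ → STCausesEq ST c e₂ e₁ → e₁ = e₂
  | .inr h, _ => h
  | .inl _, .inr h => h.symm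
  | .inl h₁₂, .inl h₂₁ => absurd h₂₁ (h₁₂.asymm hST hconn hc he₁)

end Causality

theorem causesEq_partialOrder_general (ST : Set (STConfig E)) (hST : IsSTStruct ST)
    (hconn : STConnected ST)
    (c : STConfig E) (hc : c ∈ ST) :
    (∀ e ∈ c.1, STCausesEq ST c e e) ∧
    (∀ e₁ ∈ c.1, ∀ e₂ ∈ c.1, ∀ e₃ ∈ c.1,
      STCausesEq ST c e₁ e₂ → STCausesEq ST c e₂ e₃ → STCausesEq ST c e₁ e₃) ∧
    (∀ e₁ ∈ c.1, ∀ e₂ ∈ c.1,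
      STCausesEq ST c e₁ e₂ → STCausesEq ST c e₂ e₁ → e₁ = e₂) :=
  ⟨fun _ _ => .inr rfl,
    fun _ he₁ _ _ _ _ => STCausesEq.trans hST hconn hc he₁,
    fun _ he₁ _ _ => STCausesEq.antisymm hST hconn hc he₁⟩

/-- for `(S,T)` in a rooted and connected ST-structure, the causality
relation extended with equality is a partial order on the events of `S`:
reflexive, transitive and antisymmetric. -/
theorem causesEq_partialOrder (ST : Set (STConfig E)) (hST : IsSTStruct ST)
    (hroot : STRooted ST) (hconn : STConnected ST)
    (c : STConfig E) (hc : c ∈ ST) :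
    (∀ e ∈ c.1, STCausesEq ST c e e) ∧
    (∀ e₁ ∈ c.1, ∀ e₂ ∈ c.1, ∀ e₃ ∈ c.1,
      STCausesEq ST c e₁ e₂ → STCausesEq ST c e₂ e₃ → STCausesEq ST c e₁ e₃) ∧
    (∀ e₁ ∈ c.1, ∀ e₂ ∈ c.1,
      STCausesEq ST c e₁ e₂ → STCausesEq ST c e₂ e₁ → e₁ = e₂) :=
  causesEq_partialOrder_general ST hST hconn c hc
end

section
/- A rooted and connected ST-structure is closed under single events if and only if it is adjacent-closed. -/
variable {E : Type*} [DecidableEq E]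

/-- Closed under single events: for every `(S,T) ∈ ST` and `e ∈ S \ T`,
both `(S, T∪{e})` and `(S\{e}, T)` are in `ST`. -/
def STClosedSingle (ST : Set (STConfig E)) : Prop :=
  ∀ c ∈ ST, ∀ e ∈ c.1, e ∉ c.2 →
    ((c.1, insert e c.2) : STConfig E) ∈ ST ∧
    ((c.1.erase e, c.2) : STConfig E) ∈ ST

/-- Adjacent-closure: the four closure conditions. -/
def STAdjClosed (ST : Set (STConfig E)) : Prop :=
  (∀ (S T : Finset E) (e e' : E), e ≠ e' → e ∉ S → e' ∉ S →
    ((S, T) : STConfig E) ∈ ST → ((insert e S, T) : STConfig E) ∈ ST →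
    ((insert e' (insert e S), T) : STConfig E) ∈ ST →
    ((insert e' S, T) : STConfig E) ∈ ST) ∧
  (∀ (S T : Finset E) (e e' : E), e ∉ S → e' ∉ T → e ≠ e' →
    ((S, T) : STConfig E) ∈ ST → ((insert e S, T) : STConfig E) ∈ ST →
    ((insert e S, insert e' T) : STConfig E) ∈ ST →
    ((S, insert e' T) : STConfig E) ∈ ST) ∧
  (∀ (S T : Finset E) (e e' : E), e ∉ S → e' ∉ T → e ≠ e' →
    ((S, T) : STConfig E) ∈ ST → ((insert e S, T) : STConfig E) ∈ ST →
    ((S, insert e' T) : STConfig E) ∈ ST →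
    ((insert e S, insert e' T) : STConfig E) ∈ ST) ∧
  (∀ (S T : Finset E) (e e' : E), e ≠ e' → e ∉ T → e' ∉ T →
    ((S, T) : STConfig E) ∈ ST → ((S, insert e T) : STConfig E) ∈ ST →
    ((S, insert e' (insert e T)) : STConfig E) ∈ ST →
    ((S, insert e' T) : STConfig E) ∈ ST)

section

variable {ST : Set (STConfig E)}

theorem STClosedSingle.adjClosed (hsub : ∀ c ∈ ST, c.2 ⊆ c.1) (h : STClosedSingle ST) :
    STAdjClosed ST := by
  refine ⟨?_, ?_, ?_, ?_⟩
  · intro S T e e' hee' heS _ hS _ hS''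
    have heT : e ∉ T := fun heT => heS (hsub _ hS heT)
    have := (h _ hS'' e (by simp) heT).2
    rwa [Finset.erase_insert_of_ne hee'.symm, Finset.erase_insert heS] at this
  · intro S T e e' heS _ hee' hS _ hS''
    have heT : e ∉ insert e' T := by
      simpa [hee'] using fun heT => heS (hsub _ hS heT)
    simpa [Finset.erase_insert heS] using (h _ hS'' e (by simp) heT).2
  · intro S T e e' _ he'T _ _ hS' hS''
    exact (h _ hS' e' (Finset.mem_insert_of_mem (hsub _ hS'' (by simp))) he'T).1
  · intro S T e e' _ _ he'T hS _ hS''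
    exact (h _ hS e' (hsub _ hS'' (by simp)) he'T).1

theorem erase_mem_of_adjClosed (hconn : STConnected ST) (hadj : STAdjClosed ST)
    {S T : Finset E} (hS : ((S, T) : STConfig E) ∈ ST) {e : E} (he : e ∈ S) (heT : e ∉ T) :
    ((S.erase e, T) : STConfig E) ∈ ST := by
  induction hn : S.card + T.card using Nat.strong_induction_on generalizing S T with
  | _ n ih =>
  have hne : ((S, T) : STConfig E) ≠ (∅, ∅) := fun h0 => by
    simp_all [Prod.ext_iff]
  rcases hconn _ hS hne with ⟨f, hf : f ∈ S, hSf⟩ | ⟨f, hf : f ∈ T, hTf⟩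
  · by_cases hfe : f = e
    · exact hfe ▸ hSf
    have heSf : e ∈ S.erase f := Finset.mem_erase.mpr ⟨Ne.symm hfe, he⟩
    have hlt : (S.erase f).card + T.card < n := by
      have := Finset.card_erase_lt_of_mem hf
      omega
    have hSfe := ih _ hlt hSf heSf heT rfl
    have key := hadj.1 ((S.erase f).erase e) T e f (Ne.symm hfe) (Finset.notMem_erase e _)
      (by simp) hSfe (by rwa [Finset.insert_erase heSf])
      (by rwa [Finset.insert_erase heSf, Finset.insert_erase hf])
    rwa [Finset.erase_right_comm,
      Finset.insert_erase (Finset.mem_erase.mpr ⟨hfe, hf⟩)] at key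
  · have hef : e ≠ f := fun h0 => heT (h0 ▸ hf)
    have hlt : S.card + (T.erase f).card < n := by
      have := Finset.card_erase_lt_of_mem hf
      omega
    have hTfe := ih _ hlt hTf he (fun h0 => heT (Finset.mem_of_mem_erase h0)) rfl
    have key := hadj.2.1 (S.erase e) (T.erase f) e f (Finset.notMem_erase e S)
      (Finset.notMem_erase f T) hef hTfe (by rwa [Finset.insert_erase he])
      (by rwa [Finset.insert_erase he, Finset.insert_erase hf])
    rwa [Finset.insert_erase hf] at key

theorem insert_mem_of_adjClosed (hST : IsSTStruct ST) (hconn : STConnected ST)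
    (hadj : STAdjClosed ST) {S T : Finset E} (hS : ((S, T) : STConfig E) ∈ ST) {e : E}
    (he : e ∈ S) (heT : e ∉ T) : ((S, insert e T) : STConfig E) ∈ ST := by
  induction S using Finset.strongInduction generalizing T with
  | _ S ih =>
  by_cases hfull : S ⊆ insert e T
  · have hS_eq : S = insert e T :=
      Finset.Subset.antisymm hfull (Finset.insert_subset he (hST.1 _ hS))
    exact hS_eq ▸ hST.2 _ hS
  obtain ⟨g, hgS, hgeT⟩ := Finset.not_subset.mp hfull
  have hge : g ≠ e := fun h0 => hgeT (h0 ▸ Finset.mem_insert_self e T)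
  have hgT : g ∉ T := fun h0 => hgeT (Finset.mem_insert_of_mem h0)
  have hSg := erase_mem_of_adjClosed hconn hadj hS hgS hgT
  have hSge := ih _ (Finset.erase_ssubset hgS) hSg
    (Finset.mem_erase.mpr ⟨Ne.symm hge, he⟩) heT
  have key := hadj.2.2.1 (S.erase g) T g e (Finset.notMem_erase g S) heT hge hSg
    (by rwa [Finset.insert_erase hgS]) hSge
  rwa [Finset.insert_erase hgS] at key

theorem STAdjClosed.closedSingle (hST : IsSTStruct ST) (hconn : STConnected ST)
    (hadj : STAdjClosed ST) : STClosedSingle ST :=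
  fun _ hc _ he heT =>
    ⟨insert_mem_of_adjClosed hST hconn hadj hc he heT,
      erase_mem_of_adjClosed hconn hadj hc he heT⟩

end

theorem closedSingle_iff_adjClosed_general (ST : Set (STConfig E)) (hST : IsSTStruct ST)
    (hconn : STConnected ST) :
    STClosedSingle ST ↔ STAdjClosed ST :=
  ⟨STClosedSingle.adjClosed hST.1, STAdjClosed.closedSingle hST hconn⟩

/-- a rooted and connected ST-structure is closed under single
events iff it is adjacent-closed. -/
theorem closedSingle_iff_adjClosed (ST : Set (STConfig E)) (hST : IsSTStruct ST)
    (hroot : STRooted ST) (hconn : STConnected ST) :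
    STClosedSingle ST ↔ STAdjClosed ST :=
  closedSingle_iff_adjClosed_general ST hST hconn
end

section
/- If an ST-structure ST is rooted, connected, closed under bounded unions, or closed under bounded intersections, then the configuration structure ST2C(ST) = {T : (T,T) ∈ ST} is respectively rooted, connected, closed under bounded unions, or closed under bounded intersections. -/
variable {E : Type*} [DecidableEq E]

/-- The configuration structure extracted from an ST-structure. -/
def ST2C (ST : Set (STConfig E)) : Set (Finset E) := {T | ((T, T) : STConfig E) ∈ ST}

def CRooted (C : Set (Finset E)) : Prop := ∅ ∈ C

def CConnected (C : Set (Finset E)) : Prop :=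
  ∀ X ∈ C, X ≠ ∅ → ∃ e ∈ X, X.erase e ∈ C

def CClosedBUnion (C : Set (Finset E)) : Prop :=
  ∀ X ∈ C, ∀ Y ∈ C, ∀ Z ∈ C, X ∪ Y ⊆ Z → X ∪ Y ∈ C

def CClosedBInter (C : Set (Finset E)) : Prop :=
  ∀ X ∈ C, ∀ Y ∈ C, ∀ Z ∈ C, X ∪ Y ⊆ Z → X ∩ Y ∈ C

section ST2C

variable {ST : Set (STConfig E)}

/-- Connectedness may only shrink the `T`-component for a while, but `T` is finite, so eventually
an event leaves `S`; the ST-structure axiom then turns `(S \ {e}, T')` into `(S \ {e}, S \ {e})`. -/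
theorem STConnected.exists_erase_mem_ST2C (hST : IsSTStruct ST) (hconn : STConnected ST)
    {S : Finset E} (hS : S ≠ ∅) (T : Finset E) (hmem : ((S, T) : STConfig E) ∈ ST) :
    ∃ e ∈ S, S.erase e ∈ ST2C ST := by
  induction T using Finset.strongInduction with
  | _ T ih =>
    have hne : ((S, T) : STConfig E) ≠ (∅, ∅) := fun h => hS (congrArg Prod.fst h)
    rcases hconn _ hmem hne with ⟨e, he, hS_erase⟩ | ⟨e, he, hT_erase⟩
    · exact ⟨e, he, hST.2 _ hS_erase⟩
    · exact ih (T.erase e) (Finset.erase_ssubset he) hT_erase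

theorem STConnected.cConnected_ST2C (hST : IsSTStruct ST) (hconn : STConnected ST) :
    CConnected (ST2C ST) :=
  fun X hX hXne => hconn.exists_erase_mem_ST2C hST hXne X hX

theorem STClosedBUnion.cClosedBUnion_ST2C (h : STClosedBUnion ST) :
    CClosedBUnion (ST2C ST) :=
  fun _ hX _ hY _ hZ hXY => h _ hX _ hY _ hZ hXY hXY

theorem STClosedBInter.cClosedBInter_ST2C (h : STClosedBInter ST) :
    CClosedBInter (ST2C ST) :=
  fun _ hX _ hY _ hZ hXY => h _ hX _ hY _ hZ hXY hXY

end ST2C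

/-- if an ST-structure is rooted, connected, closed under bounded
unions, or closed under bounded intersections, then so is the configuration
structure `ST2C ST`. -/
theorem st2c_preserves_properties (ST : Set (STConfig E)) (hST : IsSTStruct ST) :
    (STRooted ST → CRooted (ST2C ST)) ∧
    (STConnected ST → CConnected (ST2C ST)) ∧
    (STClosedBUnion ST → CClosedBUnion (ST2C ST)) ∧
    (STClosedBInter ST → CClosedBInter (ST2C ST)) :=
  ⟨id, fun h => h.cConnected_ST2C hST,
    STClosedBUnion.cClosedBUnion_ST2C, STClosedBInter.cClosedBInter_ST2C⟩
end

section
/- For a configuration structure C, the ST-structure ST(C) obtained by adding (X,X) for each X ∈ C and (Y,X) for each asynchronous step X →step Y, simulates each asynchronous step by single steps: for every asynchronous step X →step Y in C there is a chain of single s- and t-steps in ST(C) from (X,X) to (Y,Y) passing through (Y,X). -/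
variable {E : Type*} [DecidableEq E]

/-- Asynchronous concurrent step in a configuration structure. -/
def AsyncStep (C : Set (Finset E)) (X Y : Finset E) : Prop :=
  X ⊆ Y ∧ ∀ Z, X ⊆ Z → Z ⊆ Y → Z ∈ C

/-- The ST-structure generated from a configuration structure: `(X,X)` for
`X ∈ C` and `(Y,X)` for each asynchronous step `X →step Y`. -/
def STofC (C : Set (Finset E)) : Set (STConfig E) :=
  {c | (c.1 = c.2 ∧ c.1 ∈ C) ∨ AsyncStep C c.2 c.1}

/-!
For `X ⊆ Z ⊆ Y`, both `Z → Y` and `X → Z` are again asynchronous steps, being sub-intervals of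
`X → Y`; hence `(Z, X)` and `(Y, Z)` lie in `ST(C)`. Filling the interval `[X, Y]` one event at a
time, i.e. along a chain of covers, gives the s-steps `(Z, X) → (Z ∪ {e}, X)` from `(X, X)` to
`(Y, X)`, and then the t-steps `(Y, Z) → (Y, Z ∪ {e})` from `(Y, X)` to `(Y, Y)`.
-/

open Relation

section CovBy

variable {α : Type*} [PartialOrder α] [LocallyFiniteOrder α]

/-- A chain of covers starting at `x` and ending at `y` never leaves `[x, y]`. -/
theorem reflTransGen_of_covBy {r : α → α → Prop} {x y : α} (hxy : x ≤ y)
    (hr : ∀ a b, x ≤ a → b ≤ y → a ⋖ b → r a b) : ReflTransGen r x y := by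
  suffices ∀ a, x ≤ a → ReflTransGen (· ⋖ ·) a y → ReflTransGen r a y from
    this x le_rfl (le_iff_reflTransGen_covBy.mp hxy)
  intro a hxa hay
  induction hay using ReflTransGen.head_induction_on with
  | refl => exact .refl
  | head hac hcy ih =>
    exact .head (hr _ _ hxa (le_iff_reflTransGen_covBy.mpr hcy) hac) (ih (hxa.trans hac.le))

end CovBy

omit [DecidableEq E] in
theorem AsyncStep.of_subset_of_subset {C : Set (Finset E)} {X Y X' Y' : Finset E}
    (h : AsyncStep C X Y) (hX : X ⊆ X') (hXY' : X' ⊆ Y') (hY : Y' ⊆ Y) :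
    AsyncStep C X' Y' :=
  ⟨hXY', fun Z hXZ hZY => h.2 Z (hX.trans hXZ) (hZY.trans hY)⟩

omit [DecidableEq E] in
theorem mem_STofC_of_asyncStep {C : Set (Finset E)} {X Y : Finset E} (h : AsyncStep C X Y) :
    ((Y, X) : STConfig E) ∈ STofC C :=
  Or.inr h

theorem STStep.of_covBy_fst {ST : Set (STConfig E)} {S S' T : Finset E}
    (hc : (S, T) ∈ ST) (hc' : (S', T) ∈ ST) (hS : S ⋖ S') :
    STStep ST (S, T) (S', T) := by
  obtain ⟨e, he, rfl⟩ := hS.exists_finset_insert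
  exact ⟨hc, hc', .inl ⟨rfl, e, he, rfl⟩⟩

theorem STStep.of_covBy_snd {ST : Set (STConfig E)} {S T T' : Finset E}
    (hc : (S, T) ∈ ST) (hc' : (S, T') ∈ ST) (hT : T ⋖ T') (hT'S : T' ⊆ S) :
    STStep ST (S, T) (S, T') := by
  obtain ⟨e, he, rfl⟩ := hT.exists_finset_insert
  exact ⟨hc, hc', .inr ⟨rfl, e, hT'S (Finset.mem_insert_self e T), he, rfl⟩⟩

theorem AsyncStep.reflTransGen_sStep {C : Set (Finset E)} {X Y : Finset E}
    (h : AsyncStep C X Y) :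
    ReflTransGen (STStep (STofC C)) ((X, X) : STConfig E) ((Y, X) : STConfig E) := by
  refine ReflTransGen.lift (p := STStep (STofC C)) (·, X) (fun _ _ => id) X Y
    (reflTransGen_of_covBy h.1 fun S S' hXS hS'Y hS => ?_)
  have hSY : S ⊆ Y := hS.le.trans hS'Y
  exact .of_covBy_fst
    (mem_STofC_of_asyncStep (h.of_subset_of_subset subset_rfl hXS hSY))
    (mem_STofC_of_asyncStep (h.of_subset_of_subset subset_rfl (hXS.trans hS.le) hS'Y)) hS

theorem AsyncStep.reflTransGen_tStep {C : Set (Finset E)} {X Y : Finset E}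
    (h : AsyncStep C X Y) :
    ReflTransGen (STStep (STofC C)) ((Y, X) : STConfig E) ((Y, Y) : STConfig E) := by
  refine ReflTransGen.lift (p := STStep (STofC C)) (Y, ·) (fun _ _ => id) X Y
    (reflTransGen_of_covBy h.1 fun T T' hXT hT'Y hT => ?_)
  have hTY : T ⊆ Y := hT.le.trans hT'Y
  exact .of_covBy_snd
    (mem_STofC_of_asyncStep (h.of_subset_of_subset hXT hTY subset_rfl))
    (mem_STofC_of_asyncStep (h.of_subset_of_subset (hXT.trans hT.le) hT'Y subset_rfl)) hT hT'Y

/-- every asynchronous step `X →step Y` of a configuration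
structure is simulated in `STofC C` by a chain of single steps from `(X,X)`
to `(Y,Y)` passing through `(Y,X)`. -/
theorem stofc_simulates_asyncStep (C : Set (Finset E)) (X Y : Finset E)
    (h : AsyncStep C X Y) :
    Relation.ReflTransGen (STStep (STofC C)) ((X, X) : STConfig E) ((Y, X) : STConfig E) ∧
    Relation.ReflTransGen (STStep (STofC C)) ((Y, X) : STConfig E) ((Y, Y) : STConfig E) := by
  exact ⟨h.reflTransGen_sStep, h.reflTransGen_tStep⟩
end

section
/- The ST-structure ST(C) generated from a configuration structure C (by adding (X,X) for X ∈ C and (Y,X) for asynchronous steps X →step Y) is adjacent-closed. -/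
variable {E : Type*} [DecidableEq E]

section

omit [DecidableEq E]

theorem AsyncStep.of_subset {C : Set (Finset E)} {X Y X' Y' : Finset E} (h : AsyncStep C X Y)
    (hX : X ⊆ X') (hXY : X' ⊆ Y') (hY : Y' ⊆ Y) : AsyncStep C X' Y' :=
  ⟨hXY, fun Z hXZ hZY => h.2 Z (hX.trans hXZ) (hZY.trans hY)⟩

theorem asyncStep_self {C : Set (Finset E)} {X : Finset E} (hX : X ∈ C) : AsyncStep C X X :=
  ⟨subset_rfl, fun _ hXZ hZX => (Finset.Subset.antisymm hZX hXZ).symm ▸ hX⟩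

theorem mem_STofC_iff {C : Set (Finset E)} {S T : Finset E} :
    ((S, T) : STConfig E) ∈ STofC C ↔ AsyncStep C T S := by
  refine ⟨?_, Or.inr⟩
  rintro (⟨hST, hS⟩ | h)
  · obtain rfl : S = T := hST
    exact asyncStep_self hS
  · exact h

theorem mem_STofC_of_subset {C : Set (Finset E)} {S T S' T' : Finset E}
    (h : ((S, T) : STConfig E) ∈ STofC C) (hT : T ⊆ T') (hTS : T' ⊆ S') (hS : S' ⊆ S) :
    ((S', T') : STConfig E) ∈ STofC C :=
  mem_STofC_iff.2 ((mem_STofC_iff.1 h).of_subset hT hTS hS)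

end

/-- the ST-structure generated from a configuration structure is
adjacent-closed. -/
theorem stofc_adjClosed (C : Set (Finset E)) : STAdjClosed (STofC C) := by
  refine ⟨?_, ?_, ?_, ?_⟩
  · intro S T e e' _ _ _ hST _ hST₂
    have hTS : T ⊆ S := (mem_STofC_iff.1 hST).1
    exact mem_STofC_of_subset hST₂ subset_rfl (hTS.trans (Finset.subset_insert _ _))
      (Finset.insert_subset_insert _ (Finset.subset_insert _ _))
  · intro S T e e' _ _ hne hST _ hST₂
    have he'S : e' ∈ S := by
      have := (mem_STofC_iff.1 hST₂).1 (Finset.mem_insert_self e' T)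
      exact (Finset.mem_insert.1 this).resolve_left hne.symm
    exact mem_STofC_of_subset hST₂ subset_rfl
      (Finset.insert_subset he'S (mem_STofC_iff.1 hST).1) (Finset.subset_insert _ _)
  · intro S T e e' _ _ _ _ heST hST'
    have hT'S : insert e' T ⊆ S := (mem_STofC_iff.1 hST').1
    exact mem_STofC_of_subset heST (Finset.subset_insert _ _)
      (hT'S.trans (Finset.subset_insert _ _)) subset_rfl
  · intro S T e e' _ _ _ hST _ hST₂
    have he'S : e' ∈ S := (mem_STofC_iff.1 hST₂).1 (Finset.mem_insert_self e' _)
    exact mem_STofC_of_subset hST (Finset.subset_insert _ _)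
      (Finset.insert_subset he'S (mem_STofC_iff.1 hST).1) subset_rfl
end

section
/- For an inpure event structure E, the ST-structure obtained by adding (X,X) for each left-closed configuration X ∈ L(E) and (Y,X) for each asynchronous step X →step Y, matches every asynchronous step X →step Y by a chain of single s- and t-steps from (X,X) to (Y,Y) passing through (Y,X). -/
variable {E : Type*} [DecidableEq E]

/-- Asynchronous step relation of an (inpure) event structure. -/
def EvStep (en : Finset E → Finset E → Prop) (X Y : Finset E) : Prop :=
  X ⊆ Y ∧ ∀ Z, Z ⊆ Y → ∃ W, W ⊆ X ∧ en W Z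

/-- Left-closed configurations of an inpure event structure. -/
def LConf (en : Finset E → Finset E → Prop) : Set (Finset E) :=
  {X | ∀ Y, Y ⊆ X → ∃ Z, Z ⊆ X ∧ en Z Y}

/-- The ST-structure generated from an inpure event structure: `(X,X)` for
each left-closed configuration `X` and `(Y,X)` for each asynchronous step. -/
def STofE (en : Finset E → Finset E → Prop) : Set (STConfig E) :=
  {c | (c.1 = c.2 ∧ c.1 ∈ LConf en) ∨ EvStep en c.2 c.1}

variable {α : Type*} {en : Finset α → Finset α → Prop} {X Y S S' T : Finset α} {e : α}

theorem Finset.reflTransGen_of_insert [DecidableEq α]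
    {r : Finset α → Finset α → Prop} {A B : Finset α} (hAB : A ⊆ B)
    (step : ∀ S e, A ⊆ S → e ∉ S → insert e S ⊆ B → r S (insert e S)) :
    Relation.ReflTransGen r A B := by
  suffices ∀ D ⊆ B \ A, Relation.ReflTransGen r A (A ∪ D) by
    simpa [Finset.union_sdiff_of_subset hAB] using this (B \ A) subset_rfl
  intro D
  induction D using Finset.induction_on with
  | empty => exact fun _ => by simpa using Relation.ReflTransGen.refl
  | insert e D heD ih =>
    intro hD
    obtain ⟨heB, heA⟩ := Finset.mem_sdiff.mp (hD (Finset.mem_insert_self e D))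
    have hDBA : D ⊆ B \ A := (Finset.subset_insert e D).trans hD
    rw [Finset.union_insert]
    refine (ih hDBA).tail (step _ e Finset.subset_union_left ?_ ?_)
    · simp [heA, heD]
    · exact Finset.insert_subset heB
        (Finset.union_subset hAB (hDBA.trans Finset.sdiff_subset))

theorem EvStep.interpolate (h : EvStep en X Y) (hXS : X ⊆ S) (hSS' : S ⊆ S') (hS'Y : S' ⊆ Y) :
    EvStep en S S' :=
  ⟨hSS', fun Z hZ => (h.2 Z (hZ.trans hS'Y)).imp fun _ hW => ⟨hW.1.trans hXS, hW.2⟩⟩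

theorem EvStep.mem_STofE (h : EvStep en X Y) : ((Y, X) : STConfig α) ∈ STofE en :=
  Or.inr h

theorem STofE_sStep [DecidableEq α] (h : EvStep en T S) (h' : EvStep en T (insert e S))
    (he : e ∉ S) : STStep (STofE en) (S, T) (insert e S, T) :=
  ⟨h.mem_STofE, h'.mem_STofE, Or.inl ⟨rfl, e, he, rfl⟩⟩

theorem STofE_tStep [DecidableEq α] (h : EvStep en T S) (h' : EvStep en (insert e T) S)
    (heS : e ∈ S) (heT : e ∉ T) : STStep (STofE en) (S, T) (S, insert e T) :=
  ⟨h.mem_STofE, h'.mem_STofE, Or.inr ⟨rfl, e, heS, heT, rfl⟩⟩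

/-- every asynchronous step `X →step Y` of an inpure event
structure is matched in the generated ST-structure by a chain of single steps
from `(X,X)` to `(Y,Y)` passing through `(Y,X)`. -/
theorem stofe_simulates_evStep (en : Finset E → Finset E → Prop)
    (X Y : Finset E) (h : EvStep en X Y) :
    Relation.ReflTransGen (STStep (STofE en)) ((X, X) : STConfig E) ((Y, X) : STConfig E) ∧
    Relation.ReflTransGen (STStep (STofE en)) ((Y, X) : STConfig E) ((Y, Y) : STConfig E) := by
  constructor
  · refine Relation.ReflTransGen.lift (fun S => ((S, X) : STConfig E)) (fun _ _ => id) _ _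
      (Finset.reflTransGen_of_insert h.1 fun S e hXS he heSY => ?_)
    have hSY := (Finset.subset_insert e S).trans heSY
    exact STofE_sStep (h.interpolate subset_rfl hXS hSY)
      (h.interpolate subset_rfl (hXS.trans (Finset.subset_insert e S)) heSY) he
  · refine Relation.ReflTransGen.lift (fun S => ((Y, S) : STConfig E)) (fun _ _ => id) _ _
      (Finset.reflTransGen_of_insert h.1 fun S e hXS he heSY => ?_)
    exact STofE_tStep (h.interpolate hXS ((Finset.subset_insert e S).trans heSY) subset_rfl)
      (h.interpolate (hXS.trans (Finset.subset_insert e S)) heSY subset_rfl)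
      (heSY (Finset.mem_insert_self e S)) he
end
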